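/- arXiv:1705.05427 — 6 statements merged into one kernel-verified Lean document; each statement's English description precedes it below -/
import Mathlib

section
/- Let θ, θ' ∈ ℝ^S with |S| ≥ 2 and suppose θ - θ' is not a scalar multiple of the all-ones vector. Then there exists a controlled Markov process E (with at least two actions) and a task reward R ∈ ℝ^S such that the set of optimal policies for reward R + θ differs from the set of optimal policies for reward R + θ'. In particular, taking R = -θ', all policies are optimal under R + θ' but not all are optimal under R + θ. -/
/-! With `R = -θ'` the reward `R + θ'` vanishes, so every policy is optimal for it. For `R + θ`
pick states `i, j` where `θ - θ'` differs, and let action `1` at `i` jump to an absorbing state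
`j` while action `0` stays at `i`. With `γ = 0` and the start at `i`, a policy's value is the
reward of the single state it reaches, so exactly one of the two choices at `i` is optimal. -/

/-- A controlled Markov process: finite state space `S`, action space `A`,
initial distribution `μ`, transition function `P`, discount factor `γ ∈ [0,1)`. -/
structure CMP (S A : Type) [Fintype S] where
  μ : S → ℝ
  μ_nonneg : ∀ s, 0 ≤ μ s
  μ_sum : ∑ s, μ s = 1
  P : S → A → S → ℝ
  P_nonneg : ∀ s a s', 0 ≤ P s a s'
  P_sum : ∀ s a, ∑ s', P s a s' = 1
  γ : ℝ
  γ_nonneg : 0 ≤ γ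
  γ_lt_one : γ < 1

variable {S A : Type} [Fintype S] [DecidableEq S]

/-- Transition matrix of the Markov chain induced by policy `π`. -/
def CMP.polMatrix (E : CMP S A) (π : S → A) : Matrix S S ℝ :=
  Matrix.of fun s s' => E.P s (π s) s'

/-- Normalized discounted state occupancy:
`η(s) = (1-γ) · Σ_{t ≥ 1} γ^(t-1) · P(s_t = s | s_0 ∼ μ; π)`. -/
noncomputable def CMP.occupancy (E : CMP S A) (π : S → A) (s : S) : ℝ :=
  (1 - E.γ) * ∑' t : ℕ, E.γ ^ t * Matrix.vecMul E.μ (E.polMatrix π ^ (t + 1)) s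

/-- Value of policy `π` under reward `Y`: `Y^⊤ η^π`. -/
noncomputable def CMP.value (E : CMP S A) (Y : S → ℝ) (π : S → A) : ℝ :=
  ∑ s, Y s * E.occupancy π s

/-- A policy is optimal for reward `Y` if it maximizes the value. -/
def CMP.IsOptimal (E : CMP S A) (Y : S → ℝ) (π : S → A) : Prop :=
  ∀ π', E.value Y π' ≤ E.value Y π

namespace CMP

theorem occupancy_of_γ_eq_zero {E : CMP S A} (hγ : E.γ = 0) (π : S → A) :
    E.occupancy π = Matrix.vecMul E.μ (E.polMatrix π) := by
  funext s
  rw [occupancy, tsum_eq_single 0 fun t ht => by rw [hγ, zero_pow ht, zero_mul]]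
  simp [hγ]

@[simp]
theorem value_zero (E : CMP S A) (π : S → A) : E.value 0 π = 0 := by
  simp [value]

theorem isOptimal_zero (E : CMP S A) (π : S → A) : E.IsOptimal 0 π := fun π' => by
  rw [value_zero, value_zero]

def stayOrJump (i j : S) : CMP S (Fin 2) where
  μ := Pi.single i 1
  μ_nonneg := (Pi.single_nonneg.2 zero_le_one : 0 ≤ (Pi.single i 1 : S → ℝ))
  μ_sum := by simp
  P s a := if s = i ∧ a = 1 then Pi.single j 1 else Pi.single s 1
  P_nonneg s a := by
    split_ifs <;> exact (Pi.single_nonneg.2 zero_le_one : 0 ≤ (Pi.single _ 1 : S → ℝ))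
  P_sum s a := by split_ifs <;> simp
  γ := 0
  γ_nonneg := le_rfl
  γ_lt_one := zero_lt_one

theorem value_stayOrJump (i j : S) (Y : S → ℝ) (π : S → Fin 2) :
    (stayOrJump i j).value Y π = Y (if π i = 1 then j else i) := by
  rw [value, occupancy_of_γ_eq_zero rfl]
  by_cases hπ : π i = 1 <;> simp [stayOrJump, polMatrix, hπ, Pi.single_apply]

theorem not_forall_isOptimal_stayOrJump {i j : S} {Y : S → ℝ} (hY : Y i ≠ Y j) :
    ¬ ∀ π, (stayOrJump i j).IsOptimal Y π := fun hall => by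
  have hjump := hall (fun _ => 0) (fun _ => 1)
  have hstay := hall (fun _ => 1) (fun _ => 0)
  simp only [value_stayOrJump, if_true, Fin.zero_ne_one, if_false] at hjump hstay
  exact hY (le_antisymm hstay hjump)

end CMP

theorem exists_ne_of_not_exists_const {ι β : Type*} [Nonempty β] {f : ι → β}
    (h : ¬ ∃ c, ∀ x, f x = c) : ∃ i j, f i ≠ f j := by
  by_contra! hconst
  rcases isEmpty_or_nonempty ι with hι | ⟨⟨i⟩⟩
  · exact h ⟨Classical.arbitrary β, isEmptyElim⟩
  · exact h ⟨f i, fun x => hconst x i⟩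

theorem stmt2_general (θ θ' : S → ℝ)
    (h : ¬ ∃ c : ℝ, ∀ s, θ s - θ' s = c) :
    ∃ E : CMP S (Fin 2),
      {π | E.IsOptimal (fun s => -θ' s + θ s) π} ≠
        {π | E.IsOptimal (fun s => -θ' s + θ' s) π} ∧
      (∀ π, E.IsOptimal (fun s => -θ' s + θ' s) π) ∧
      ¬ (∀ π, E.IsOptimal (fun s => -θ' s + θ s) π) := by
  obtain ⟨i, j, hij⟩ := exists_ne_of_not_exists_const h
  have hzero : (fun s => -θ' s + θ' s) = 0 := funext fun s => neg_add_cancel (θ' s)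
  have hall : ∀ π, (CMP.stayOrJump i j).IsOptimal (fun s => -θ' s + θ' s) π :=
    hzero ▸ CMP.isOptimal_zero _
  have hnot : ¬ ∀ π, (CMP.stayOrJump i j).IsOptimal (fun s => -θ' s + θ s) π :=
    CMP.not_forall_isOptimal_stayOrJump fun hY => hij (by linarith)
  exact ⟨_, fun heq => hnot fun π => (Set.ext_iff.mp heq π).mpr (hall π), hall, hnot⟩

/-- if θ - θ' is not constant (and |S| ≥ 2), there is an
environment with two actions and a task reward (namely R = -θ') for which the
optimal-policy sets under R+θ and R+θ' differ; indeed all policies are optimal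
under R+θ' but not all under R+θ. -/
theorem stmt2 (θ θ' : S → ℝ) (hcard : 2 ≤ Fintype.card S)
    (h : ¬ ∃ c : ℝ, ∀ s, θ s - θ' s = c) :
    ∃ E : CMP S (Fin 2),
      {π | E.IsOptimal (fun s => -θ' s + θ s) π} ≠
        {π | E.IsOptimal (fun s => -θ' s + θ' s) π} ∧
      (∀ π, E.IsOptimal (fun s => -θ' s + θ' s) π) ∧
      ¬ (∀ π, E.IsOptimal (fun s => -θ' s + θ s) π) :=
  stmt2_general θ θ' h
end

section
/- Let B be a non-degenerate ellipsoid in ℝ^d centered at c, and let v ∈ ℝ^d be nonzero. Let B⁺ be the minimum-volume enclosing ellipsoid of the half-ellipsoid {u ∈ B : (u - c)^⊤ v ≥ 0}. Then vol(B⁺)/vol(B) ≤ e^{-1/(2(d+1))}. -/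
/-!
Pulling back along `u ↦ c + L u` turns the half-ellipsoid into the half-ball
`{x : ‖x‖ ≤ 1, ⟪e, x⟫ ≥ 0}`, where `e` is the unit vector along `Lᵀ v`. With `n = d`, the half-ball
lies in the ellipsoid `{x : ‖N (x - e / (n + 1))‖ ≤ 1}`, where `N` scales the line `ℝ e` by
`(n + 1) / n` and its orthogonal complement by `√(n² - 1) / n`. Volumes scale by determinants, so
`vol B⁺ / vol B ≤ 1 / det N`, and `(det N)² ≥ e^{1/(n+1)}` follows from `e^{1/(n+1)} ≤ (n + 1) / n`,
Bernoulli's inequality `(1 - 1/n²)^(n-1) ≥ 1 - (n - 1)/n²` and `n³ ≤ (n + 1)(n² - n + 1)`.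
-/

open MeasureTheory

/-- An ellipsoid in ℝ^d: the image of the closed unit Euclidean ball under an
invertible affine map (non-degenerate since the linear part is invertible). -/
def IsEllipsoid {d : ℕ} (E : Set (EuclideanSpace ℝ (Fin d))) : Prop :=
  ∃ (c : EuclideanSpace ℝ (Fin d))
    (L : EuclideanSpace ℝ (Fin d) ≃ₗ[ℝ] EuclideanSpace ℝ (Fin d)),
    E = (fun u => c + L u) '' Metric.closedBall 0 1

open Module Real Pointwise
open scoped RealInnerProductSpace

theorem exp_one_div_add_one_le_sq_mul_pow (n : ℕ) (hn : 1 ≤ n) :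
    exp (1 / (n + 1)) ≤ ((n + 1) / n) ^ 2 * ((n ^ 2 - 1) / n ^ 2) ^ (n - 1) := by
  have hn1 : (1 : ℝ) ≤ n := by exact_mod_cast hn
  have hexp : exp (1 / (n + 1)) ≤ (n + 1) / n :=
    calc exp (1 / (n + 1)) ≤ 1 / (1 - 1 / (n + 1)) :=
          exp_bound_div_one_sub_of_interval (by positivity)
            ((div_lt_one (by positivity)).2 (by linarith))
      _ = (n + 1) / n := by rw [one_sub_div (by positivity), add_sub_cancel_right, one_div_div]
  have hbernoulli : 1 - ((n - 1 : ℕ) : ℝ) / n ^ 2 ≤ ((n ^ 2 - 1) / n ^ 2) ^ (n - 1) :=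
    calc (1 : ℝ) - ((n - 1 : ℕ) : ℝ) / n ^ 2 = 1 + ((n - 1 : ℕ) : ℝ) * (-1 / n ^ 2) := by ring
      _ ≤ (1 + -1 / (n : ℝ) ^ 2) ^ (n - 1) := one_add_mul_le_pow (by
          rw [neg_div, neg_le_neg_iff, div_le_iff₀ (by positivity)]; nlinarith) _
      _ = ((n ^ 2 - 1) / n ^ 2) ^ (n - 1) := by congr 1; field_simp; ring
  calc exp (1 / (n + 1)) ≤ (n + 1) / n := hexp
    _ ≤ ((n + 1) / n) ^ 2 * (1 - ((n - 1 : ℕ) : ℝ) / n ^ 2) := by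
      rw [Nat.cast_sub hn, Nat.cast_one, div_le_iff₀ (by positivity)]
      field_simp
      nlinarith
    _ ≤ _ := by gcongr

variable {F : Type*} [NormedAddCommGroup F] [InnerProductSpace ℝ F] [FiniteDimensional ℝ F]

namespace Submodule

variable (K : Submodule ℝ F)

noncomputable def orthogonalScaling (a b : ℝ) : F →ₗ[ℝ] F :=
  a • K.starProjection.toLinearMap + b • Kᗮ.starProjection.toLinearMap

theorem orthogonalScaling_apply (a b : ℝ) (x : F) :
    K.orthogonalScaling a b x = a • K.starProjection x + b • Kᗮ.starProjection x := rfl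

theorem det_orthogonalScaling (a b : ℝ) :
    LinearMap.det (K.orthogonalScaling a b) = a ^ finrank ℝ K * b ^ finrank ℝ Kᗮ := by
  let e := K.prodEquivOfIsCompl Kᗮ K.isCompl_orthogonal
  have hconj : e.symm.toLinearMap ∘ₗ K.orthogonalScaling a b ∘ₗ e.symm.symm.toLinearMap =
      LinearMap.prodMap (a • LinearMap.id) (b • LinearMap.id) := by
    ext x
    all_goals simp [e, orthogonalScaling_apply]
    simp [K.starProjection_apply_eq_zero_iff.2 x.2]
  rw [← LinearMap.det_conj _ e.symm, hconj, LinearMap.det_prodMap, LinearMap.det_smul,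
    LinearMap.det_smul, LinearMap.det_id, LinearMap.det_id, mul_one, mul_one]

theorem norm_sq_orthogonalScaling (a b : ℝ) (x : F) :
    ‖K.orthogonalScaling a b x‖ ^ 2 =
      a ^ 2 * ‖K.starProjection x‖ ^ 2 + b ^ 2 * ‖Kᗮ.starProjection x‖ ^ 2 := by
  have horth : ⟪a • K.starProjection x, b • Kᗮ.starProjection x⟫ = 0 :=
    K.inner_right_of_mem_orthogonal (K.smul_mem a (K.starProjection_apply_mem x))
      (Kᗮ.smul_mem b (Kᗮ.starProjection_apply_mem x))
  rw [orthogonalScaling_apply, sq, norm_add_sq_eq_norm_sq_add_norm_sq_of_inner_eq_zero _ _ horth]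
  simp only [norm_smul, Real.norm_eq_abs, mul_mul_mul_comm, abs_mul_abs_self]
  ring

end Submodule

theorem norm_orthogonalScaling_span_singleton_sub_le_one {D : ℝ} (hD : 1 ≤ D) {e x : F}
    (he : ‖e‖ = 1) (hx : ‖x‖ ≤ 1) (hex : 0 ≤ ⟪e, x⟫) :
    ‖(ℝ ∙ e).orthogonalScaling ((D + 1) / D) (√(D ^ 2 - 1) / D) (x - (D + 1)⁻¹ • e)‖ ≤ 1 := by
  set t := ⟪e, x⟫
  have hts : t ≤ ‖x‖ := (real_inner_le_norm e x).trans (by rw [he, one_mul])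
  have hpar : ‖(ℝ ∙ e).starProjection (x - (D + 1)⁻¹ • e)‖ = |t - (D + 1)⁻¹| := by
    rw [Submodule.starProjection_unit_singleton ℝ he, inner_sub_right, real_inner_smul_right,
      real_inner_self_eq_norm_sq, he, norm_smul, he, one_pow, mul_one, mul_one, Real.norm_eq_abs]
  have hperp : ‖(ℝ ∙ e)ᗮ.starProjection (x - (D + 1)⁻¹ • e)‖ ^ 2 = ‖x‖ ^ 2 - t ^ 2 := by
    rw [map_sub, map_smul, Submodule.starProjection_orthogonalComplement_singleton_eq_zero,
      smul_zero, sub_zero, Submodule.norm_sq_eq_add_norm_sq_starProjection x (ℝ ∙ e),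
      Submodule.starProjection_unit_singleton ℝ he,
      norm_smul, he, mul_one, Real.norm_eq_abs, sq_abs]
    ring
  -- the two sides differ by `2 (D + 1) t (1 - t) + (D ^ 2 - 1) (1 - ‖x‖ ^ 2)`
  have key : ((D + 1) * t - 1) ^ 2 + (D ^ 2 - 1) * (‖x‖ ^ 2 - t ^ 2) ≤ D ^ 2 := by
    have hcut : 0 ≤ (D + 1) * (t * (1 - t)) :=
      mul_nonneg (by linarith) (mul_nonneg hex (sub_nonneg.2 (hts.trans hx)))
    have hball : 0 ≤ (D ^ 2 - 1) * (1 - ‖x‖ ^ 2) :=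
      mul_nonneg (by nlinarith) (sub_nonneg.2 (pow_le_one₀ (norm_nonneg x) hx))
    nlinarith
  rw [← sq_le_one_iff₀ (norm_nonneg _), Submodule.norm_sq_orthogonalScaling, hpar, hperp, sq_abs,
    div_pow, div_pow, Real.sq_sqrt (by nlinarith)]
  have hD0 : D ≠ 0 := by positivity
  calc _ = (((D + 1) * t - 1) ^ 2 + (D ^ 2 - 1) * (‖x‖ ^ 2 - t ^ 2)) / D ^ 2 := by
        field_simp
    _ ≤ 1 := (div_le_one (by positivity)).2 key

theorem exp_le_det_orthogonalScaling_span_singleton {e : F} (he : ‖e‖ = 1) :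
    exp (1 / (2 * (finrank ℝ F + 1))) ≤ LinearMap.det ((ℝ ∙ e).orthogonalScaling
      ((finrank ℝ F + 1) / finrank ℝ F) (√((finrank ℝ F : ℝ) ^ 2 - 1) / finrank ℝ F)) := by
  set n := finrank ℝ F
  have hn : 1 ≤ n := Module.finrank_pos_iff_exists_ne_zero.2 ⟨e, by rintro rfl; simp at he⟩
  have hline : finrank ℝ (ℝ ∙ e) = 1 := finrank_span_singleton (by rintro rfl; simp at he)
  have hcodim : finrank ℝ (ℝ ∙ e)ᗮ = n - 1 := by
    have := (ℝ ∙ e).finrank_add_finrank_orthogonal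
    omega
  have hD : (1 : ℝ) ≤ n := by exact_mod_cast hn
  rw [Submodule.det_orthogonalScaling, hline, hcodim, pow_one]
  refine (pow_le_pow_iff_left₀ (exp_pos _).le (by positivity) two_ne_zero).1 ?_
  calc exp (1 / (2 * (n + 1))) ^ 2 = exp (1 / (n + 1)) := by
        rw [sq, ← exp_add]
        congr 1
        field_simp
        ring
    _ ≤ ((n + 1) / n) ^ 2 * ((n ^ 2 - 1) / n ^ 2) ^ (n - 1) :=
        exp_one_div_add_one_le_sq_mul_pow n hn
    _ = ((n + 1) / n * (√((n : ℝ) ^ 2 - 1) / n) ^ (n - 1)) ^ 2 := by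
        rw [mul_pow, ← pow_mul, mul_comm (n - 1), pow_mul, div_pow (√_), sq_sqrt (by nlinarith)]

theorem exists_ellipsoid_superset_halfBall {w : F} (hw : w ≠ 0) :
    ∃ (c : F) (M : F ≃ₗ[ℝ] F),
      {x ∈ Metric.closedBall (0 : F) 1 | 0 ≤ ⟪w, x⟫} ⊆ (fun u => c + M u) '' Metric.closedBall 0 1 ∧
      |LinearMap.det (M : F →ₗ[ℝ] F)| ≤ exp (-1 / (2 * (finrank ℝ F + 1))) := by
  set e := ‖w‖⁻¹ • w
  have he : ‖e‖ = 1 := norm_smul_inv_norm hw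
  have hD : (1 : ℝ) ≤ finrank ℝ F := by
    exact_mod_cast Module.finrank_pos_iff_exists_ne_zero.2 ⟨w, hw⟩
  set D : ℝ := (finrank ℝ F : ℝ)
  set N := (ℝ ∙ e).orthogonalScaling ((D + 1) / D) (√(D ^ 2 - 1) / D)
  have hdetN : exp (1 / (2 * (D + 1))) ≤ LinearMap.det N :=
    exp_le_det_orthogonalScaling_span_singleton he
  have hdetN_pos : 0 < LinearMap.det N := (exp_pos _).trans_le hdetN
  let N' := N.equivOfDetNeZero hdetN_pos.ne'
  have hN' : (N' : F →ₗ[ℝ] F) = N := LinearEquiv.coe_ofIsUnitDet _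
  refine ⟨(D + 1)⁻¹ • e, N'.symm, ?_, ?_⟩
  · rintro x ⟨hx, hwx⟩
    rw [mem_closedBall_zero_iff] at hx
    have hex : 0 ≤ ⟪e, x⟫ := by rw [real_inner_smul_left]; positivity
    refine ⟨N (x - (D + 1)⁻¹ • e), ?_, ?_⟩
    · exact mem_closedBall_zero_iff.2
        (norm_orthogonalScaling_span_singleton_sub_le_one hD he hx hex)
    · show (D + 1)⁻¹ • e + N'.symm (N' (x - (D + 1)⁻¹ • e)) = x
      rw [LinearEquiv.symm_apply_apply, add_sub_cancel]
  · rw [LinearEquiv.det_coe_symm, hN', abs_inv, abs_of_pos hdetN_pos,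
      inv_le_comm₀ hdetN_pos (exp_pos _), ← exp_neg, neg_div, neg_neg]
    exact hdetN

theorem addHaar_image_add_linearMap {E : Type*} [NormedAddCommGroup E] [NormedSpace ℝ E]
    [MeasurableSpace E] [BorelSpace E] [FiniteDimensional ℝ E] (μ : Measure E)
    [μ.IsAddHaarMeasure] (c : E) (f : E →ₗ[ℝ] E) (s : Set E) :
    μ ((fun u => c + f u) '' s) = ENNReal.ofReal |LinearMap.det f| * μ s := by
  have h : (fun u => c + f u) '' s = c +ᵥ (f '' s) := by
    rw [← Set.image_vadd, Set.image_image]; rfl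
  rw [h, measure_vadd, Measure.addHaar_image_linearMap]

theorem stmt4_general (d : ℕ) (c : EuclideanSpace ℝ (Fin d))
    (L : EuclideanSpace ℝ (Fin d) ≃ₗ[ℝ] EuclideanSpace ℝ (Fin d))
    (v : EuclideanSpace ℝ (Fin d)) (hv : v ≠ 0)
    (B : Set (EuclideanSpace ℝ (Fin d)))
    (hB : B = (fun u => c + L u) '' Metric.closedBall 0 1)
    (Bplus : Set (EuclideanSpace ℝ (Fin d)))
    (hmin : ∀ E' : Set (EuclideanSpace ℝ (Fin d)), IsEllipsoid E' →
      {u ∈ B | 0 ≤ ∑ i, v i * (u i - c i)} ⊆ E' → volume Bplus ≤ volume E') :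
    volume Bplus ≤ ENNReal.ofReal (Real.exp (-1 / (2 * (d + 1)))) * volume B := by
  set w := LinearMap.adjoint (L : EuclideanSpace ℝ (Fin d) →ₗ[ℝ] EuclideanSpace ℝ (Fin d)) v
  have hwL : ∀ x, ⟪w, x⟫ = ⟪v, L x⟫ := fun x => LinearMap.adjoint_inner_left _ x v
  have hw : w ≠ 0 := by
    intro hw0
    have := hwL (L.symm v)
    rw [hw0, inner_zero_left, LinearEquiv.apply_symm_apply, eq_comm, inner_self_eq_zero] at this
    exact hv this
  obtain ⟨c₀, M, hhalf, hdetM⟩ := exists_ellipsoid_superset_halfBall hw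
  set A := fun u => c + L u
  set E' := A '' ((fun u => c₀ + M u) '' Metric.closedBall 0 1)
  have hE' : IsEllipsoid E' := ⟨c + L c₀, M.trans L, by
    simp only [E', A, Set.image_image, LinearEquiv.trans_apply, map_add, add_assoc]⟩
  have hsubE' : {u ∈ B | 0 ≤ ∑ i, v i * (u i - c i)} ⊆ E' := by
    rw [hB]
    rintro _ ⟨⟨x, hx, rfl⟩, hcond⟩
    refine Set.mem_image_of_mem A (hhalf ⟨hx, ?_⟩)
    rw [hwL]
    simpa [A, PiLp.inner_apply, mul_comm] using hcond
  calc volume Bplus ≤ volume E' := hmin E' hE' hsubE'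
    _ = ENNReal.ofReal |LinearMap.det (M : EuclideanSpace ℝ (Fin d) →ₗ[ℝ] _)| * volume B := by
      simp only [hB, E', A]
      rw [← LinearEquiv.coe_coe L, ← LinearEquiv.coe_coe M, addHaar_image_add_linearMap,
        addHaar_image_add_linearMap, addHaar_image_add_linearMap, mul_left_comm]
    _ ≤ ENNReal.ofReal (Real.exp (-1 / (2 * (d + 1)))) * volume B := by
      gcongr
      simpa using hdetM

/-- central-cut volume reduction for the ellipsoid method.  If B is
a non-degenerate ellipsoid centered at c, v ≠ 0, and B⁺ is a minimum-volume
enclosing ellipsoid of the half-ellipsoid {u ∈ B : (u-c)ᵀv ≥ 0}, then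
vol(B⁺) ≤ e^(-1/(2(d+1))) · vol(B). -/
theorem stmt4 (d : ℕ) (c : EuclideanSpace ℝ (Fin d))
    (L : EuclideanSpace ℝ (Fin d) ≃ₗ[ℝ] EuclideanSpace ℝ (Fin d))
    (v : EuclideanSpace ℝ (Fin d)) (hv : v ≠ 0)
    (B : Set (EuclideanSpace ℝ (Fin d)))
    (hB : B = (fun u => c + L u) '' Metric.closedBall 0 1)
    (Bplus : Set (EuclideanSpace ℝ (Fin d)))
    (hBplusEll : IsEllipsoid Bplus)
    (hsub : {u ∈ B | 0 ≤ ∑ i, v i * (u i - c i)} ⊆ Bplus)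
    (hmin : ∀ E' : Set (EuclideanSpace ℝ (Fin d)), IsEllipsoid E' →
      {u ∈ B | 0 ≤ ∑ i, v i * (u i - c i)} ⊆ E' → volume Bplus ≤ volume E') :
    volume Bplus ≤ ENNReal.ofReal (Real.exp (-1 / (2 * (d + 1)))) * volume B :=
  stmt4_general d c L v hv B hB Bplus hmin
end

section
/- In the ellipsoid algorithm for repeated inverse RL, suppose at round t a mistake occurs, i.e., (θ⋆ + R_t)^⊤(x^{a⋆} - x^{a_t}) > ε, while the learner played greedily with respect to c_t + R_t, i.e., (c_t + R_t)^⊤(x^{a⋆} - x^{a_t}) ≤ 0. Then any θ eliminated by the cut (i.e., satisfying (θ - c_t)^⊤(x^{a⋆} - x^{a_t}) < 0) satisfies ‖θ⋆ - θ‖_∞ > ε/2, provided ‖x^{a⋆}‖₁ ≤ 1 and ‖x^{a_t}‖₁ ≤ 1. -/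
/-! Subtracting the greedy inequality and the cut inequality from the mistake inequality cancels
`R` and `c`, leaving `ε < (θ⋆ - θ)ᵀ(x^{a⋆} - x^{a})`. By Hölder's inequality the right-hand side
is at most `‖θ⋆ - θ‖_∞ ‖x^{a⋆} - x^{a}‖₁ ≤ 2 ‖θ⋆ - θ‖_∞`. -/

theorem sum_mul_le_norm_mul_sum_abs {ι : Type*} [Fintype ι] (a b : ι → ℝ) :
    ∑ i, a i * b i ≤ ‖a‖ * ∑ i, |b i| := by
  rw [Finset.mul_sum]
  refine Finset.sum_le_sum fun i _ => ?_
  calc a i * b i ≤ |a i| * |b i| := abs_mul (a i) (b i) ▸ le_abs_self _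
    _ ≤ ‖a‖ * |b i| := by gcongr; exact norm_le_pi_norm a i

theorem sum_abs_sub_le_sum_abs_add_sum_abs {ι : Type*} [Fintype ι] (x y : ι → ℝ) :
    ∑ i, |x i - y i| ≤ ∑ i, |x i| + ∑ i, |y i| :=
  (Finset.sum_le_sum fun i _ => abs_sub (x i) (y i)).trans_eq Finset.sum_add_distrib

/-- if a mistake occurs ((θ⋆+R)ᵀ(x^{a⋆}-x^{a}) > ε) while the
learner played greedily w.r.t. c + R, then any θ eliminated by the central cut
satisfies ‖θ⋆ - θ‖_∞ > ε/2, provided the feature vectors have ℓ₁ norm ≤ 1.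
(The norm on `Fin d → ℝ` is the sup norm.) -/
theorem stmt6 (d : ℕ) (ε : ℝ) (θs c θ R xstar xa : Fin d → ℝ)
    (hxstar : ∑ i, |xstar i| ≤ 1) (hxa : ∑ i, |xa i| ≤ 1)
    (hmistake : ε < ∑ i, (θs i + R i) * (xstar i - xa i))
    (hgreedy : ∑ i, (c i + R i) * (xstar i - xa i) ≤ 0)
    (helim : ∑ i, (θ i - c i) * (xstar i - xa i) < 0) :
    ε / 2 < ‖θs - θ‖ := by
  have hsplit : ∑ i, (θs i - θ i) * (xstar i - xa i) =
      ∑ i, (θs i + R i) * (xstar i - xa i) - ∑ i, (c i + R i) * (xstar i - xa i)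
        - ∑ i, (θ i - c i) * (xstar i - xa i) := by
    rw [← Finset.sum_sub_distrib, ← Finset.sum_sub_distrib]
    exact Finset.sum_congr rfl fun i _ => by ring
  have hl1 : ∑ i, |xstar i - xa i| ≤ 2 := by
    linarith [sum_abs_sub_le_sum_abs_add_sum_abs xstar xa]
  have hgap : ε < ‖θs - θ‖ * 2 :=
    calc ε < ∑ i, (θs i - θ i) * (xstar i - xa i) := by linarith
      _ ≤ ‖θs - θ‖ * ∑ i, |xstar i - xa i| := sum_mul_le_norm_mul_sum_abs (θs - θ) (xstar - xa)
      _ ≤ ‖θs - θ‖ * 2 := by gcongr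
  linarith
end

section
/- Let (X, R) be a linear bandit task with K actions where each feature vector x^{(a)} ∈ ℝ^d is entrywise non-negative with ‖x^{(a)}‖₁ ≤ 1. Then there exists an MDP with d+1 states and K actions, with a designated initial state s_ref, such that for each action a, the policy taking a in s_ref has normalized discounted state occupancy equal to 1 - ‖x^{(a)}‖₁ on s_ref and equal to x^{(a)}(j) on the j-th other state. -/
variable {S A : Type} [Fintype S] [DecidableEq S]

open Finset Matrix

theorem tsum_pow_mul_geom_sum {K : Type*} [NormedField K] [CompleteSpace K] {r s : K}
    (hr : ‖r‖ < 1) (hrs : ‖r * s‖ < 1) :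
    ∑' t : ℕ, r ^ t * ∑ k ∈ range (t + 1), s ^ k = ((1 - r * s) * (1 - r))⁻¹ := by
  have hterm (t : ℕ) : r ^ t * ∑ k ∈ range (t + 1), s ^ k
      = ∑ k ∈ range (t + 1), (r * s) ^ k * r ^ (t - k) := by
    rw [mul_sum]
    refine sum_congr rfl fun k hk => ?_
    rw [mul_pow, mul_right_comm, ← pow_add, Nat.add_sub_cancel' (mem_range_succ_iff.mp hk),
      mul_comm]
  simp_rw [hterm]
  rw [← tsum_mul_tsum_eq_tsum_sum_range_of_summable_norm, tsum_geometric_of_norm_lt_one hrs,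
    tsum_geometric_of_norm_lt_one hr, mul_inv]
  · simpa only [norm_pow] using summable_geometric_of_lt_one (norm_nonneg _) hrs
  · simpa only [norm_pow] using summable_geometric_of_lt_one (norm_nonneg _) hr

section StarChain

variable {ι : Type} [DecidableEq ι]

def starMatrix (p : ℝ) (q : ι → ℝ) : Matrix (Option ι) (Option ι) ℝ :=
  Matrix.of fun s s' => match s, s' with
    | none, none => p
    | none, some j => q j
    | some i, s' => if s' = some i then 1 else 0

theorem starMatrix_nonneg {p : ℝ} {q : ι → ℝ} (hp : 0 ≤ p) (hq : ∀ j, 0 ≤ q j)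
    (s s' : Option ι) : 0 ≤ starMatrix p q s s' := by
  rcases s with _ | i <;> rcases s' with _ | j <;> simp [starMatrix, hp, hq, apply_ite]

variable [Fintype ι]

theorem sum_starMatrix_apply {p : ℝ} {q : ι → ℝ} (h : p + ∑ j, q j = 1) (s : Option ι) :
    ∑ s', starMatrix p q s s' = 1 := by
  rcases s with _ | i <;> simp [starMatrix, Fintype.sum_option, h]

theorem vecMul_starMatrix_none (v : Option ι → ℝ) (p : ℝ) (q : ι → ℝ) :
    vecMul v (starMatrix p q) none = v none * p := by
  simp [vecMul, dotProduct, Fintype.sum_option, starMatrix]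

theorem vecMul_starMatrix_some (v : Option ι → ℝ) (p : ℝ) (q : ι → ℝ) (j : ι) :
    vecMul v (starMatrix p q) (some j) = v none * q j + v (some j) := by
  simp [vecMul, dotProduct, Fintype.sum_option, starMatrix]

theorem vecMul_starMatrix_pow_none (p : ℝ) (q : ι → ℝ) (t : ℕ) :
    vecMul (fun s => if s = none then 1 else 0) (starMatrix p q ^ t) none = p ^ t := by
  induction t with
  | zero => simp
  | succ t ih => rw [pow_succ, ← vecMul_vecMul, vecMul_starMatrix_none, ih, pow_succ]

theorem vecMul_starMatrix_pow_some (p : ℝ) (q : ι → ℝ) (t : ℕ) (j : ι) :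
    vecMul (fun s => if s = none then 1 else 0) (starMatrix p q ^ t) (some j)
      = q j * ∑ k ∈ range t, p ^ k := by
  induction t with
  | zero => simp
  | succ t ih =>
    rw [pow_succ, ← vecMul_vecMul, vecMul_starMatrix_some, ih, vecMul_starMatrix_pow_none,
      sum_range_succ]
    ring

end StarChain

namespace CMP

theorem norm_γ_lt_one {T B : Type} [Fintype T] (E : CMP T B) : ‖E.γ‖ < 1 := by
  rw [Real.norm_of_nonneg E.γ_nonneg]
  exact E.γ_lt_one

theorem norm_γ_mul_polMatrix_lt_one {T B : Type} [Fintype T] (E : CMP T B) (π : T → B)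
    (s s' : T) : ‖E.γ * E.polMatrix π s s'‖ < 1 := by
  have hP_le_one : E.P s (π s) s' ≤ 1 :=
    E.P_sum s (π s) ▸ single_le_sum (fun s'' _ => E.P_nonneg s (π s) s'') (mem_univ s')
  change ‖E.γ * E.P s (π s) s'‖ < 1
  rw [norm_mul, Real.norm_of_nonneg (E.P_nonneg s (π s) s')]
  exact mul_lt_one_of_nonneg_of_lt_one_left (norm_nonneg _) E.norm_γ_lt_one hP_le_one

variable {ι : Type} [Fintype ι] [DecidableEq ι]

theorem occupancy_none_of_polMatrix_eq_starMatrix (E : CMP (Option ι) A) (π : Option ι → A)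
    {p : ℝ} {q : ι → ℝ} (hμ : E.μ = fun s => if s = none then 1 else 0)
    (hP : E.polMatrix π = starMatrix p q) :
    E.occupancy π none = (1 - E.γ) * p / (1 - E.γ * p) := by
  have hγp : ‖E.γ * p‖ < 1 := by
    simpa [hP, starMatrix] using E.norm_γ_mul_polMatrix_lt_one π none none
  simp_rw [occupancy, hμ, hP, vecMul_starMatrix_pow_none, pow_succ, ← mul_assoc, ← mul_pow]
  rw [tsum_mul_right, tsum_geometric_of_norm_lt_one hγp]
  ring

theorem occupancy_some_of_polMatrix_eq_starMatrix (E : CMP (Option ι) A) (π : Option ι → A)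
    {p : ℝ} {q : ι → ℝ} (hμ : E.μ = fun s => if s = none then 1 else 0)
    (hP : E.polMatrix π = starMatrix p q) (j : ι) :
    E.occupancy π (some j) = q j / (1 - E.γ * p) := by
  have hγp : ‖E.γ * p‖ < 1 := by
    simpa [hP, starMatrix] using E.norm_γ_mul_polMatrix_lt_one π none none
  simp_rw [occupancy, hμ, hP, vecMul_starMatrix_pow_some, mul_left_comm _ (q j), tsum_mul_left]
  rw [tsum_pow_mul_geom_sum E.norm_γ_lt_one hγp]
  have hγ : 1 - E.γ ≠ 0 := sub_ne_zero.mpr E.γ_lt_one.ne'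
  field_simp

end CMP

section LinearBandit

variable {ι : Type} [Fintype ι]

noncomputable def stayProb (γ : ℝ) (y : ι → ℝ) : ℝ :=
  (1 - ∑ j, y j) / (1 - γ * ∑ j, y j)

noncomputable def jumpProb (γ : ℝ) (y : ι → ℝ) (j : ι) : ℝ :=
  (1 - γ) * y j / (1 - γ * ∑ j, y j)

theorem one_sub_mul_sum_pos {γ : ℝ} (hγ0 : 0 ≤ γ) (hγ1 : γ < 1) {y : ι → ℝ}
    (hy1 : ∑ j, y j ≤ 1) : 0 < 1 - γ * ∑ j, y j := by
  nlinarith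

theorem stayProb_nonneg {γ : ℝ} (hγ0 : 0 ≤ γ) (hγ1 : γ < 1) {y : ι → ℝ}
    (hy1 : ∑ j, y j ≤ 1) : 0 ≤ stayProb γ y :=
  div_nonneg (sub_nonneg.mpr hy1) (one_sub_mul_sum_pos hγ0 hγ1 hy1).le

theorem jumpProb_nonneg {γ : ℝ} (hγ0 : 0 ≤ γ) (hγ1 : γ < 1) {y : ι → ℝ}
    (hy0 : ∀ j, 0 ≤ y j) (hy1 : ∑ j, y j ≤ 1) (j : ι) : 0 ≤ jumpProb γ y j :=
  div_nonneg (mul_nonneg (sub_nonneg.mpr hγ1.le) (hy0 j)) (one_sub_mul_sum_pos hγ0 hγ1 hy1).le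

theorem stayProb_add_sum_jumpProb {γ : ℝ} {y : ι → ℝ} (hden : 1 - γ * ∑ j, y j ≠ 0) :
    stayProb γ y + ∑ j, jumpProb γ y j = 1 := by
  simp only [stayProb, jumpProb, ← sum_div, ← mul_sum]
  rw [← add_div, div_eq_one_iff_eq hden]
  ring

theorem one_sub_mul_stayProb {γ : ℝ} {y : ι → ℝ} (hden : 1 - γ * ∑ j, y j ≠ 0) :
    1 - γ * stayProb γ y = (1 - γ) / (1 - γ * ∑ j, y j) := by
  rw [stayProb, eq_div_iff hden, sub_mul, mul_assoc, div_mul_cancel₀ _ hden]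
  ring

variable [DecidableEq ι]

noncomputable def linearBanditCMP (γ : ℝ) (hγ0 : 0 ≤ γ) (hγ1 : γ < 1) (x : A → ι → ℝ)
    (hx0 : ∀ a j, 0 ≤ x a j) (hx1 : ∀ a, ∑ j, x a j ≤ 1) : CMP (Option ι) A where
  μ s := if s = none then 1 else 0
  μ_nonneg s := by split_ifs <;> norm_num
  μ_sum := by simp
  P s a := starMatrix (stayProb γ (x a)) (jumpProb γ (x a)) s
  P_nonneg s a := starMatrix_nonneg (stayProb_nonneg hγ0 hγ1 (hx1 a))
    (jumpProb_nonneg hγ0 hγ1 (hx0 a) (hx1 a)) s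
  P_sum s a := sum_starMatrix_apply
    (stayProb_add_sum_jumpProb (one_sub_mul_sum_pos hγ0 hγ1 (hx1 a)).ne') s
  γ := γ
  γ_nonneg := hγ0
  γ_lt_one := hγ1

theorem polMatrix_linearBanditCMP {γ : ℝ} (hγ0 : 0 ≤ γ) (hγ1 : γ < 1) {x : A → ι → ℝ}
    (hx0 : ∀ a j, 0 ≤ x a j) (hx1 : ∀ a, ∑ j, x a j ≤ 1) (π : Option ι → A) :
    (linearBanditCMP γ hγ0 hγ1 x hx0 hx1).polMatrix π
      = starMatrix (stayProb γ (x (π none))) (jumpProb γ (x (π none))) := by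
  ext (_ | i) s' <;> simp [CMP.polMatrix, linearBanditCMP, starMatrix]

theorem occupancy_linearBanditCMP_none {γ : ℝ} (hγ0 : 0 ≤ γ) (hγ1 : γ < 1) {x : A → ι → ℝ}
    (hx0 : ∀ a j, 0 ≤ x a j) (hx1 : ∀ a, ∑ j, x a j ≤ 1) (π : Option ι → A) :
    (linearBanditCMP γ hγ0 hγ1 x hx0 hx1).occupancy π none = 1 - ∑ j, x (π none) j := by
  have hden := (one_sub_mul_sum_pos hγ0 hγ1 (hx1 (π none))).ne'
  have hγ : 1 - γ ≠ 0 := sub_ne_zero.mpr hγ1.ne'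
  rw [CMP.occupancy_none_of_polMatrix_eq_starMatrix _ π rfl (polMatrix_linearBanditCMP ..)]
  change (1 - γ) * _ / (1 - γ * _) = _
  rw [one_sub_mul_stayProb hden, stayProb]
  field_simp

theorem occupancy_linearBanditCMP_some {γ : ℝ} (hγ0 : 0 ≤ γ) (hγ1 : γ < 1) {x : A → ι → ℝ}
    (hx0 : ∀ a j, 0 ≤ x a j) (hx1 : ∀ a, ∑ j, x a j ≤ 1) (π : Option ι → A) (j : ι) :
    (linearBanditCMP γ hγ0 hγ1 x hx0 hx1).occupancy π (some j) = x (π none) j := by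
  have hden := (one_sub_mul_sum_pos hγ0 hγ1 (hx1 (π none))).ne'
  have hγ : 1 - γ ≠ 0 := sub_ne_zero.mpr hγ1.ne'
  rw [CMP.occupancy_some_of_polMatrix_eq_starMatrix _ π rfl (polMatrix_linearBanditCMP ..)]
  change _ / (1 - γ * _) = _
  rw [one_sub_mul_stayProb hden, jumpProb]
  field_simp

end LinearBandit

/-- any linear bandit task with non-negative features of ℓ₁ norm
at most 1 can be emulated by an MDP with d+1 states (states = Option (Fin d),
with `none` the reference/initial state): for each action `a`, any policy taking
`a` at the initial state has occupancy `1 - ‖x^a‖₁` at the initial state and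
`x^a j` at the j-th other state. -/
theorem stmt7 (d K : ℕ) (γ : ℝ) (hγ0 : 0 ≤ γ) (hγ1 : γ < 1)
    (x : Fin K → Fin d → ℝ) (hx0 : ∀ a j, 0 ≤ x a j)
    (hx1 : ∀ a, ∑ j, x a j ≤ 1) :
    ∃ E : CMP (Option (Fin d)) (Fin K),
      E.γ = γ ∧ E.μ = (fun s => if s = none then 1 else 0) ∧
      ∀ (a : Fin K) (π : Option (Fin d) → Fin K), π none = a →
        E.occupancy π none = 1 - ∑ j, x a j ∧
        ∀ j, E.occupancy π (some j) = x a j := by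
  refine ⟨linearBanditCMP γ hγ0 hγ1 x hx0 hx1, rfl, rfl, fun a π hπ => ?_⟩
  subst hπ
  exact ⟨occupancy_linearBanditCMP_none hγ0 hγ1 hx0 hx1 π,
    occupancy_linearBanditCMP_some hγ0 hγ1 hx0 hx1 π⟩
end

section
/- Let X be a d×K real matrix with columns x^{(1)},…,x^{(K)}, let X̃ = X(I_K − (1/K)1_K 1_K^⊤), and define spread(X) as the d-th largest singular value of X̃. Suppose spread(X) > 0. Then for any y ∈ ℝ^d with ‖y‖₂ > ε√((K-1)/2)/spread(X), there exist indices a, a' ∈ {1,…,K} such that y^⊤(x^{(a)} − x^{(a')}) > ε. -/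
/-!
Put `w = yᵀ X̃`. Its entries sum to zero and `w a - w a' = yᵀ (x⁽ᵃ⁾ - x⁽ᵃ'⁾)`. By the variational
characterisation of the spread, `‖w‖₂ ≥ spread(X) ‖y‖₂ > ε √((K-1)/2)`. On the other hand a
mean-zero vector whose entries range over an interval of length `D` has `‖w‖₂² ≤ K D² / 4`
(Bhatia–Davis), and `K/4 ≤ (K-1)/2` as soon as `K ≥ 2`, which `spread(X) > 0` forces. Hence the
range `D = max w - min w` exceeds `ε`.
-/

open Matrix Finset

namespace Matrix

variable {ι κ : Type*} [Fintype κ]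

/-- The paper's `X̃ = X (I - (1/K) 1 1ᵀ)`. -/
noncomputable def centerRows (X : Matrix ι κ ℝ) : Matrix ι κ ℝ :=
  fun i k => X i k - (∑ k', X i k') / Fintype.card κ

lemma sum_centerRows_apply (X : Matrix ι κ ℝ) (i : ι) : ∑ k, centerRows X i k = 0 := by
  rcases isEmpty_or_nonempty κ with hκ | hκ
  · simp
  · have hcard : (Fintype.card κ : ℝ) ≠ 0 := Nat.cast_ne_zero.2 Fintype.card_ne_zero
    simp [centerRows, sum_sub_distrib, mul_div_cancel₀, hcard]

lemma sum_vecMul_centerRows [Fintype ι] (X : Matrix ι κ ℝ) (y : ι → ℝ) :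
    ∑ k, (y ᵥ* centerRows X) k = 0 := by
  simp only [vecMul, dotProduct]
  rw [Finset.sum_comm]
  simp [← mul_sum, sum_centerRows_apply]

lemma vecMul_centerRows_sub [Fintype ι] (X : Matrix ι κ ℝ) (y : ι → ℝ) (a a' : κ) :
    (y ᵥ* centerRows X) a - (y ᵥ* centerRows X) a' = ∑ i, y i * (X i a - X i a') := by
  simp only [vecMul, dotProduct, ← sum_sub_distrib, centerRows]
  exact sum_congr rfl fun i _ => by ring

lemma centerRows_of_subsingleton [Subsingleton κ] (X : Matrix ι κ ℝ) : centerRows X = 0 := by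
  ext i k
  have : Fintype.card κ = 1 := Fintype.card_eq_one_iff.2 ⟨k, fun k' => Subsingleton.elim _ _⟩
  simp [centerRows, Fintype.sum_subsingleton _ k, this]

/-- The least element of this set is the `d`-th singular value of a `d × K` matrix `M`. -/
def unitVecMulNorms [Fintype ι] (M : Matrix ι κ ℝ) : Set ℝ :=
  {r | ∃ y : ι → ℝ, ∑ i, y i ^ 2 = 1 ∧ r = √(∑ k, (y ᵥ* M) k ^ 2)}

lemma mul_sqrt_sum_sq_le_of_mem_lowerBounds [Fintype ι] {M : Matrix ι κ ℝ} {s : ℝ}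
    (hs : s ∈ lowerBounds (unitVecMulNorms M)) (y : ι → ℝ) :
    s * √(∑ i, y i ^ 2) ≤ √(∑ k, (y ᵥ* M) k ^ 2) := by
  set n := √(∑ i, y i ^ 2) with hn
  rcases (show 0 ≤ n from Real.sqrt_nonneg _).eq_or_lt with hn0 | hn0
  · rw [← hn0, mul_zero]
    exact Real.sqrt_nonneg _
  have hunit : ∑ i, (n⁻¹ • y) i ^ 2 = 1 := by
    simp only [Pi.smul_apply, smul_eq_mul, mul_pow, ← mul_sum]
    rw [← Real.sq_sqrt (sum_nonneg fun i _ => sq_nonneg (y i)), ← hn, inv_pow,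
      inv_mul_cancel₀ (pow_pos hn0 2).ne']
  have hscale : √(∑ k, ((n⁻¹ • y) ᵥ* M) k ^ 2) = n⁻¹ * √(∑ k, (y ᵥ* M) k ^ 2) := by
    simp only [smul_vecMul, Pi.smul_apply, smul_eq_mul, mul_pow, ← mul_sum]
    rw [Real.sqrt_mul (by positivity), Real.sqrt_sq (by positivity)]
  have := hs ⟨n⁻¹ • y, hunit, rfl⟩
  rwa [hscale, ← div_eq_inv_mul, le_div_iff₀ hn0] at this

end Matrix

section

variable {κ : Type*} [Fintype κ]

lemma sum_sq_le_of_sum_eq_zero {w : κ → ℝ} (hw : ∑ k, w k = 0) {m M : ℝ}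
    (hm : ∀ k, m ≤ w k) (hM : ∀ k, w k ≤ M) :
    ∑ k, w k ^ 2 ≤ Fintype.card κ / 4 * (M - m) ^ 2 := by
  have hpt : ∀ k, w k ^ 2 ≤ (M + m) * w k - M * m := fun k => by
    nlinarith [mul_nonneg (sub_nonneg.2 (hM k)) (sub_nonneg.2 (hm k))]
  calc ∑ k, w k ^ 2 ≤ ∑ k, ((M + m) * w k - M * m) := sum_le_sum fun k _ => hpt k
    _ = Fintype.card κ * -(M * m) := by
      simp [sum_sub_distrib, ← mul_sum, hw]
    _ ≤ Fintype.card κ / 4 * (M - m) ^ 2 := by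
      have : (0 : ℝ) ≤ Fintype.card κ := Nat.cast_nonneg _
      nlinarith [mul_nonneg this (sq_nonneg (M + m))]

lemma exists_sqrt_sum_sq_le_of_sum_eq_zero [Nonempty κ] {w : κ → ℝ} (hw : ∑ k, w k = 0) :
    ∃ a a', 0 ≤ w a - w a' ∧ √(∑ k, w k ^ 2) ≤ √(Fintype.card κ / 4) * (w a - w a') := by
  obtain ⟨a, ha⟩ := Finite.exists_max w
  obtain ⟨a', ha'⟩ := Finite.exists_min w
  have hD : 0 ≤ w a - w a' := sub_nonneg.2 (ha' a)
  refine ⟨a, a', hD, ?_⟩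
  rw [← Real.sqrt_sq hD, ← Real.sqrt_mul (by positivity)]
  exact Real.sqrt_le_sqrt (sum_sq_le_of_sum_eq_zero hw ha' ha)

end

theorem stmt11_general (d K : ℕ) (X : Matrix (Fin d) (Fin K) ℝ) (ε s : ℝ)
    (tX : Matrix (Fin d) (Fin K) ℝ)
    (htX : ∀ i k, tX i k = X i k - (∑ k', X i k') / K)
    (hs : IsLeast {r : ℝ | ∃ y : Fin d → ℝ, ∑ i, (y i) ^ 2 = 1 ∧
        r = Real.sqrt (∑ k, (∑ i, y i * tX i k) ^ 2)} s)
    (hspos : 0 < s)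
    (y : Fin d → ℝ)
    (hy : ε * Real.sqrt (((K : ℝ) - 1) / 2) / s < Real.sqrt (∑ i, (y i) ^ 2)) :
    ∃ a a' : Fin K, ε < ∑ i, y i * (X i a - X i a') := by
  obtain rfl : tX = centerRows X := by
    ext i k
    simp [htX, centerRows]
  have hK : 2 ≤ K := by
    by_contra! hK
    have := Fin.subsingleton_iff_le_one.2 (Nat.le_of_lt_succ hK)
    obtain ⟨y₀, -, rfl⟩ := hs.1
    simp [centerRows_of_subsingleton] at hspos
  have hKR : (2 : ℝ) ≤ K := by exact_mod_cast hK
  have : Nonempty (Fin K) := ⟨⟨0, by omega⟩⟩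
  obtain ⟨a, a', hD, hw⟩ := exists_sqrt_sum_sq_le_of_sum_eq_zero (sum_vecMul_centerRows X y)
  refine ⟨a, a', ?_⟩
  rw [← vecMul_centerRows_sub]
  have hc : √((K : ℝ) / 4) ≤ √(((K : ℝ) - 1) / 2) := Real.sqrt_le_sqrt (by linarith)
  have hc0 : 0 < √(((K : ℝ) - 1) / 2) := Real.sqrt_pos.2 (by linarith)
  rw [div_lt_iff₀ hspos] at hy
  refine lt_of_mul_lt_mul_right ?_ hc0.le
  calc ε * √(((K : ℝ) - 1) / 2) < s * √(∑ i, y i ^ 2) := by linarith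
    _ ≤ √(∑ k, (y ᵥ* centerRows X) k ^ 2) := mul_sqrt_sum_sq_le_of_mem_lowerBounds hs.2 y
    _ ≤ √((K : ℝ) / 4) * _ := by simpa using hw
    _ ≤ √(((K : ℝ) - 1) / 2) * _ := mul_le_mul_of_nonneg_right hc hD
    _ = _ := mul_comm _ _

/-- let X̃ = X(I - (1/K)11ᵀ) and let s = spread(X) be the d-th
largest singular value of X̃, characterized variationally as the minimum of
‖yᵀX̃‖₂ over unit vectors y ∈ ℝ^d.  If s > 0, then any y with
‖y‖₂ > ε√((K-1)/2)/s separates two columns of X by more than ε. -/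
theorem stmt11 (d K : ℕ) (X : Matrix (Fin d) (Fin K) ℝ) (ε s : ℝ)
    (tX : Matrix (Fin d) (Fin K) ℝ)
    (htX : ∀ i k, tX i k = X i k - (∑ k', X i k') / K)
    (hs : IsLeast {r : ℝ | ∃ y : Fin d → ℝ, ∑ i, (y i) ^ 2 = 1 ∧
        r = Real.sqrt (∑ k, (∑ i, y i * tX i k) ^ 2)} s)
    (hspos : 0 < s) (hε : 0 < ε)
    (y : Fin d → ℝ)
    (hy : ε * Real.sqrt (((K : ℝ) - 1) / 2) / s < Real.sqrt (∑ i, (y i) ^ 2)) :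
    ∃ a a' : Fin K, ε < ∑ i, y i * (X i a - X i a') :=
  stmt11_general d K X ε s tX htX hs hspos y hy
end

section
/- In the linear bandit setting, suppose the ellipsoid algorithm's center c at some round T₀ satisfies ‖c − θ⋆‖_∞ > ε. Then there exists a task (X, R) with two actions on which the algorithm (which plays greedily with respect to c + R, with arbitrary tie-breaking) can make a mistake, i.e., can incur loss l = (θ⋆ + R)^⊤(x^{(a⋆)} − x^{(a)}) > ε. Contrapositively, if no choice of task and tie-breaking can cause a further mistake, then ‖c − θ⋆‖_∞ ≤ ε. -/
open Finset

theorem exists_lt_abs_apply_of_lt_norm {ι : Type*} [Fintype ι] {v : ι → ℝ} {ε : ℝ}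
    (hε : 0 ≤ ε) (h : ε < ‖v‖) : ∃ i, ε < |v i| := by
  by_contra! hv
  exact h.not_ge ((pi_norm_le_iff_of_nonneg hε).2 hv)

theorem exists_sum_abs_le_one_lt_sum_mul_of_lt_norm {ι : Type*} [Fintype ι] [DecidableEq ι]
    {v : ι → ℝ} {ε : ℝ} (h : ε < ‖v‖) :
    ∃ y : ι → ℝ, ∑ i, |y i| ≤ 1 ∧ ε < ∑ i, v i * y i := by
  rcases lt_or_ge ε 0 with hε | hε
  · exact ⟨0, by simp, by simpa using hε⟩
  obtain ⟨j, hj⟩ := exists_lt_abs_apply_of_lt_norm hε h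
  refine ⟨Pi.single j (SignType.sign (v j) : ℝ), ?_, ?_⟩
  · rw [sum_eq_single_of_mem j (mem_univ j) fun i _ hi => by simp [hi]]
    cases SignType.sign (v j) <;> simp
  · rwa [sum_eq_single_of_mem j (mem_univ j) fun i _ hi => by simp [hi], Pi.single_eq_same,
      self_mul_sign]

/-- if the ellipsoid center c satisfies ‖c - θ⋆‖_∞ > ε, then
there is a two-action task (features with ℓ₁ norm ≤ 1, task reward R = -c in
the construction) on which both actions are greedily tied w.r.t. c + R yet one
available (tie-broken) choice incurs loss more than ε under θ⋆ + R.
(The norm on `Fin d → ℝ` is the sup norm.) -/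
theorem stmt12 (d : ℕ) (ε : ℝ) (c θs : Fin d → ℝ) (h : ε < ‖c - θs‖) :
    ∃ (x : Fin 2 → Fin d → ℝ) (R : Fin d → ℝ),
      (∀ a, ∑ i, |x a i| ≤ 1) ∧
      (∀ a b : Fin 2, ∑ i, (c i + R i) * x a i = ∑ i, (c i + R i) * x b i) ∧
      (∃ a b : Fin 2,
        ε < ∑ i, (θs i + R i) * x b i - ∑ i, (θs i + R i) * x a i) := by
  -- With R = -c every action is worth 0 under c + R, so the zero action may be played
  -- instead of one worth more than ε under θ⋆ - c.
  rw [norm_sub_rev] at h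
  obtain ⟨y, hy, hlt⟩ := exists_sum_abs_le_one_lt_sum_mul_of_lt_norm h
  refine ⟨![0, y], -c, ?_, fun a b => by simp, 0, 1, by simpa [sub_eq_add_neg] using hlt⟩
  simpa [Fin.forall_fin_two] using hy
end
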